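/- arXiv:2101.03333 — 13 statements merged into one kernel-verified Lean document; each statement's English description precedes it below -/
import Mathlib

section
/- Let (G, ·, e, α) be a regular Hom-group. If an element g ∈ G satisfies g·g = α(g) and α(α(g)) = g, then g = e. -/
/-- A Hom-group `(G, ·, e, α)` with inverse map `inv`. -/
structure HomGroup (G : Type*) where
  mul : G → G → G
  e : G
  α : G → G
  inv : G → G
  hom_assoc : ∀ g h k, mul (α g) (mul h k) = mul (mul g h) (α k)
  α_mul : ∀ g h, α (mul g h) = mul (α g) (α h)
  mul_e : ∀ g, mul g e = α g
  e_mul : ∀ g, mul e g = α g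
  α_e : α e = e
  inv_anti : ∀ g h, inv (mul g h) = mul (inv h) (inv g)
  exists_inv_index : ∀ g, ∃ k,
    (α)^[k] (mul g (inv g)) = e ∧ (α)^[k] (mul (inv g) g) = e

/-- A Hom-group is regular when `α` is bijective; then the invertibility
condition simplifies to `g·g⁻¹ = g⁻¹·g = e`. -/
def HomGroup.IsRegular {G : Type*} (H : HomGroup G) : Prop :=
  Function.Bijective H.α ∧ ∀ g, H.mul g (H.inv g) = H.e ∧ H.mul (H.inv g) g = H.e

/-- `g` has invertibility index `n`: `n` is the smallest natural number with
`α^n(g·g⁻¹) = α^n(g⁻¹·g) = e`. -/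
def HomGroup.HasInvIndex {G : Type*} (H : HomGroup G) (g : G) (n : ℕ) : Prop :=
  ((H.α)^[n] (H.mul g (H.inv g)) = H.e ∧ (H.α)^[n] (H.mul (H.inv g) g) = H.e) ∧
    ∀ m, ((H.α)^[m] (H.mul g (H.inv g)) = H.e ∧ (H.α)^[m] (H.mul (H.inv g) g) = H.e) → n ≤ m

/-- A Hom-subgroup: a subset containing `e`, closed under inverses and products. -/
def HomGroup.IsHomSubgroup {G : Type*} (Hg : HomGroup G) (H : Set G) : Prop :=
  Hg.e ∈ H ∧ (∀ h ∈ H, Hg.inv h ∈ H) ∧ ∀ h₁ ∈ H, ∀ h₂ ∈ H, Hg.mul h₁ h₂ ∈ H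

namespace HomGroup

variable {G : Type*} (H : HomGroup G) {g : G}

theorem α_mul_mul_of_mul_self (hg : H.mul g g = H.α g) (x : G) :
    H.mul (H.α g) (H.mul g x) = H.α (H.mul g x) := by
  rw [H.hom_assoc, hg, H.α_mul]

theorem α_α_eq_e_of_mul_self (hg : H.mul g g = H.α g) (hinv : H.mul g (H.inv g) = H.e) :
    H.α (H.α g) = H.e := by
  have := H.α_mul_mul_of_mul_self hg (H.inv g)
  rwa [hinv, H.mul_e, H.α_e] at this

end HomGroup

theorem stmt0 {G : Type*} (H : HomGroup G) (hreg : H.IsRegular)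
    (g : G) (h1 : H.mul g g = H.α g) (h2 : H.α (H.α g) = g) :
    g = H.e :=
  h2 ▸ H.α_α_eq_e_of_mul_self h1 (hreg.2 g).1
end

section
/- Let (G, ·, e, α) be a Hom-group and let g ∈ G be an element of invertibility index n (i.e. n is the smallest natural number with α^n(g·g⁻¹) = α^n(g⁻¹·g) = e). If h, k ∈ G satisfy α^i(g)·h = α^i(g)·k for all i ≥ n, then α²(h) = α²(k). -/
/-! `u := α^n(g⁻¹)` is a left inverse of `a := α^n(g)`, since `α^n` is multiplicative
and `α^n(g⁻¹·g) = e`. Hom-associativity then cancels `a` from `a·h = a·k` at the price of two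
applications of `α`: `α(α h) = e·α h = (u·a)·α h = α u·(a·h)`, and likewise for `k`. -/

namespace HomGroup

variable {G : Type*} (H : HomGroup G)

lemma iterate_mul (n : ℕ) (a b : G) :
    H.α^[n] (H.mul a b) = H.mul (H.α^[n] a) (H.α^[n] b) := by
  induction n with
  | zero => rfl
  | succ m ih =>
    rw [Function.iterate_succ_apply', ih, H.α_mul,
      Function.iterate_succ_apply', Function.iterate_succ_apply']

lemma iterate_inv_mul_iterate_of_hasInvIndex {g : G} {n : ℕ} (hg : H.HasInvIndex g n) :
    H.mul (H.α^[n] (H.inv g)) (H.α^[n] g) = H.e := by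
  rw [← H.iterate_mul]
  exact hg.1.2

lemma α_α_eq_of_mul_eq_mul_of_mul_eq_e {u a h k : G} (hu : H.mul u a = H.e)
    (hhk : H.mul a h = H.mul a k) : H.α (H.α h) = H.α (H.α k) :=
  calc H.α (H.α h) = H.mul (H.mul u a) (H.α h) := by rw [hu, H.e_mul]
    _ = H.mul (H.α u) (H.mul a h) := (H.hom_assoc _ _ _).symm
    _ = H.mul (H.α u) (H.mul a k) := by rw [hhk]
    _ = H.mul (H.mul u a) (H.α k) := H.hom_assoc _ _ _
    _ = H.α (H.α k) := by rw [hu, H.e_mul]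

end HomGroup

theorem stmt1 {G : Type*} (H : HomGroup G) (g : G) (n : ℕ)
    (hg : H.HasInvIndex g n) (h k : G)
    (hyp : ∀ i, n ≤ i → H.mul ((H.α)^[i] g) h = H.mul ((H.α)^[i] g) k) :
    H.α (H.α h) = H.α (H.α k) :=
  H.α_α_eq_of_mul_eq_mul_of_mul_eq_e (H.iterate_inv_mul_iterate_of_hasInvIndex hg) (hyp n le_rfl)
end

section
/- Let (G, ·, e, α) be a Hom-group, let g ∈ G have invertibility index n and let h ∈ G have invertibility index m. If (α^i(g⁻¹)·α^j(h⁻¹))·(α^i(g)·α^j(h)) = e for all i ≥ n and all j ≥ m, then α^{i+5}(g)·α^{j+5}(h) = α^{j+5}(h)·α^{i+5}(g) for all i ≥ n and j ≥ m. -/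
/-!
Put `a = αⁱ g`, `a' = αⁱ g⁻¹`, `b = αʲ h`, `b' = αʲ h⁻¹`; beyond the invertibility indices these
are honest two-sided inverse pairs, so `α(ab)` and `α(ba)` have the two-sided inverses `α(b'a')`
and `α(a'b')`. The hypothesis says that `a'b'` is also a left inverse of `ab`. As in a group,
a left and a right inverse agree, here only after applying `α²`; doing this twice identifies
`α⁵(ab)` with `α⁵(ba)`.
-/

namespace HomGroup

variable {G : Type*} (H : HomGroup G)

lemma iterate_α_mul (k : ℕ) (x y : G) :
    H.α^[k] (H.mul x y) = H.mul (H.α^[k] x) (H.α^[k] y) :=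
  Function.Semiconj₂.iterate H.α_mul k x y

lemma iterate_α_e (k : ℕ) : H.α^[k] H.e = H.e :=
  Function.iterate_fixed H.α_e k

lemma iterate_α_eq_e_of_le {x : G} {n i : ℕ} (hx : H.α^[n] x = H.e) (hni : n ≤ i) :
    H.α^[i] x = H.e := by
  obtain ⟨k, rfl⟩ := Nat.exists_eq_add_of_le hni
  rw [add_comm, Function.iterate_add_apply, hx, iterate_α_e]

variable {H} in
lemma HasInvIndex.iterate_mul_inv {g : G} {n i : ℕ} (hg : H.HasInvIndex g n) (hni : n ≤ i) :
    H.mul (H.α^[i] g) (H.α^[i] (H.inv g)) = H.e ∧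
      H.mul (H.α^[i] (H.inv g)) (H.α^[i] g) = H.e := by
  simp only [← iterate_α_mul]
  exact ⟨H.iterate_α_eq_e_of_le hg.1.1 hni, H.iterate_α_eq_e_of_le hg.1.2 hni⟩

lemma α_α_left_inv_eq_right_inv {x y z : G} (hxy : H.mul x y = H.e) (hyz : H.mul y z = H.e) :
    H.α (H.α x) = H.α (H.α z) :=
  calc H.α (H.α x) = H.mul (H.α x) (H.mul y z) := by rw [hyz, H.mul_e]
    _ = H.α (H.α z) := by rw [H.hom_assoc, hxy, H.e_mul]

lemma α_mul_mul_α_mul_eq_e {a a' b b' : G} (ha : H.mul a a' = H.e)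
    (hb : H.mul b b' = H.e) :
    H.mul (H.α (H.mul a b)) (H.α (H.mul b' a')) = H.e := by
  rw [H.α_mul a b, ← H.hom_assoc, H.hom_assoc b b' a', hb, H.e_mul, ← H.α_mul, ← H.α_mul,
    ha, H.α_e, H.α_e]

lemma iterate_five_α_mul_comm {a a' b b' : G}
    (haa' : H.mul a a' = H.e) (ha'a : H.mul a' a = H.e)
    (hbb' : H.mul b b' = H.e) (hb'b : H.mul b' b = H.e)
    (hab : H.mul (H.mul a' b') (H.mul a b) = H.e) :
    H.α^[5] (H.mul a b) = H.α^[5] (H.mul b a) := by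
  have hab_left : H.mul (H.α (H.mul a' b')) (H.α (H.mul a b)) = H.e := by
    rw [← H.α_mul, hab, H.α_e]
  have hα3 : H.α (H.α (H.α (H.mul a' b'))) = H.α (H.α (H.α (H.mul b' a'))) :=
    H.α_α_left_inv_eq_right_inv hab_left (H.α_mul_mul_α_mul_eq_e haa' hbb')
  have hba_right : H.mul (H.α (H.α (H.α (H.mul b a)))) (H.α (H.α (H.α (H.mul b' a'))))
      = H.e := by
    rw [← hα3, ← H.α_mul, ← H.α_mul, H.α_mul_mul_α_mul_eq_e hbb' haa', H.α_e, H.α_e]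
  have hab_right : H.mul (H.α (H.α (H.α (H.mul b' a')))) (H.α (H.α (H.α (H.mul a b))))
      = H.e := by
    rw [← H.α_mul, ← H.α_mul, H.α_mul_mul_α_mul_eq_e hb'b ha'a, H.α_e, H.α_e]
  exact (H.α_α_left_inv_eq_right_inv hba_right hab_right).symm

end HomGroup

theorem stmt3 {G : Type*} (Hg : HomGroup G) (g h : G) (n m : ℕ)
    (hgn : Hg.HasInvIndex g n) (hhm : Hg.HasInvIndex h m)
    (hyp : ∀ i, n ≤ i → ∀ j, m ≤ j →
      Hg.mul (Hg.mul ((Hg.α)^[i] (Hg.inv g)) ((Hg.α)^[j] (Hg.inv h)))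
        (Hg.mul ((Hg.α)^[i] g) ((Hg.α)^[j] h)) = Hg.e) :
    ∀ i, n ≤ i → ∀ j, m ≤ j →
      Hg.mul ((Hg.α)^[i + 5] g) ((Hg.α)^[j + 5] h) =
        Hg.mul ((Hg.α)^[j + 5] h) ((Hg.α)^[i + 5] g) := by
  intro i hi j hj
  obtain ⟨haa', ha'a⟩ := hgn.iterate_mul_inv hi
  obtain ⟨hbb', hb'b⟩ := hhm.iterate_mul_inv hj
  have key := Hg.iterate_five_α_mul_comm haa' ha'a hbb' hb'b (hyp i hi j hj)
  simpa only [Hg.iterate_α_mul, ← Function.iterate_add_apply, add_comm 5] using key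
end

section
/- Let (G, ·, e, α) be a regular abelian Hom-group. Then for all g, h, k, l ∈ G one has (g·h)·(k·l) = (g·k)·(h·l). -/
theorem HomGroup.α_mul_mul_mul {G : Type*} (H : HomGroup G) (g h k l : G) :
    H.α (H.mul (H.mul g h) (H.mul k l)) = H.mul (H.α (H.α g)) (H.mul (H.mul h k) (H.α l)) := by
  rw [H.α_mul (H.mul g h), H.α_mul g, ← H.hom_assoc, H.hom_assoc h k l]

theorem HomGroup.mul_mul_mul_comm {G : Type*} (H : HomGroup G) (hα : Function.Injective H.α)
    (hcomm : ∀ g h, H.mul g h = H.mul h g) (g h k l : G) :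
    H.mul (H.mul g h) (H.mul k l) = H.mul (H.mul g k) (H.mul h l) :=
  hα <| by rw [H.α_mul_mul_mul, H.α_mul_mul_mul, hcomm h k]

theorem stmt4 {G : Type*} (H : HomGroup G) (hreg : H.IsRegular)
    (hcomm : ∀ g h, H.mul g h = H.mul h g) :
    ∀ g h k l, H.mul (H.mul g h) (H.mul k l) = H.mul (H.mul g k) (H.mul h l) :=
  H.mul_mul_mul_comm hreg.1.injective hcomm
end

section
/- Let (G, ·, e) be a group, let α : G → G be a group homomorphism, let Z(G) be the center of G, and set Z_α(G) = {g ∈ G : α(g·x) = α(x·g) for all x ∈ G}. Then: (1) Z(G) ⊆ α⁻¹(α(Z(G))) ⊆ Z_α(G); (2) if α is injective then Z(G) = Z_α(G); (3) if α is injective and α(Z(G)) ⊆ Z(G), then Z_α(G) contains e and is closed under the twisted product μ_α(g,h) = α(g·h) and under inverses (so it is a Hom-subgroup of the twist Hom-group G_α = (G, μ_α, e, α)). -/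
/-- `Z_α(G) = {g ∈ G : α(g·x) = α(x·g) for all x ∈ G}`. -/
def Zalpha {G : Type*} [Group G] (α : G →* G) : Set G :=
  {g | ∀ x, α (g * x) = α (x * g)}

/-! `Z_α(G)` is the preimage under `α` of the centralizer of `α(G)`, hence always a subgroup.
If `α` is injective it is the center, and `α(Z(G)) ⊆ Z(G)` makes it closed under `α(g·h)`. -/

section Zalpha

variable {G : Type*} [Group G] {α : G →* G}

theorem Zalpha_eq_comap_centralizer_range :
    Zalpha α = ((Subgroup.centralizer (α.range : Set G)).comap α : Set G) := by
  ext g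
  simp only [Zalpha, Set.mem_ofPred_eq, SetLike.mem_coe, Subgroup.mem_comap,
    Subgroup.mem_centralizer_iff, MonoidHom.coe_range, Set.forall_mem_range, map_mul, eq_comm]

theorem one_mem_Zalpha : (1 : G) ∈ Zalpha α := by
  rw [Zalpha_eq_comap_centralizer_range]
  exact Subgroup.one_mem _

theorem inv_mem_Zalpha {g : G} (hg : g ∈ Zalpha α) : g⁻¹ ∈ Zalpha α := by
  rw [Zalpha_eq_comap_centralizer_range] at hg ⊢
  exact Subgroup.inv_mem _ hg

theorem preimage_image_center_subset_Zalpha :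
    α ⁻¹' (α '' (Subgroup.center G : Set G)) ⊆ Zalpha α := by
  rintro g ⟨z, hz, hzg⟩ x
  rw [map_mul, map_mul, ← hzg, ← map_mul, ← map_mul, Subgroup.mem_center_iff.mp hz x]

theorem Zalpha_eq_center (hα : Function.Injective α) :
    Zalpha α = (Subgroup.center G : Set G) := by
  ext g
  rw [SetLike.mem_coe, Subgroup.mem_center_iff]
  exact forall_congr' fun x => hα.eq_iff.trans eq_comm

theorem map_mul_mem_Zalpha (hα : Function.Injective α)
    (hcenter : α '' (Subgroup.center G : Set G) ⊆ Subgroup.center G) {g h : G}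
    (hg : g ∈ Zalpha α) (hh : h ∈ Zalpha α) : α (g * h) ∈ Zalpha α := by
  rw [Zalpha_eq_center hα] at hg hh ⊢
  exact hcenter ⟨g * h, Subgroup.mul_mem _ hg hh, rfl⟩

end Zalpha

theorem stmt7 {G : Type*} [Group G] (α : G →* G) :
    ((Subgroup.center G : Set G) ⊆ (⇑α) ⁻¹' (⇑α '' (Subgroup.center G : Set G)) ∧
      (⇑α) ⁻¹' (⇑α '' (Subgroup.center G : Set G)) ⊆ Zalpha α) ∧
    (Function.Injective α → Zalpha α = (Subgroup.center G : Set G)) ∧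
    (Function.Injective α → ⇑α '' (Subgroup.center G : Set G) ⊆ (Subgroup.center G : Set G) →
      ((1 : G) ∈ Zalpha α ∧
        (∀ g ∈ Zalpha α, ∀ h ∈ Zalpha α, α (g * h) ∈ Zalpha α) ∧
        ∀ g ∈ Zalpha α, g⁻¹ ∈ Zalpha α)) :=
  ⟨⟨Set.subset_preimage_image _ _, preimage_image_center_subset_Zalpha⟩, Zalpha_eq_center,
    fun hα hcenter => ⟨one_mem_Zalpha, fun _ hg _ hh => map_mul_mem_Zalpha hα hcenter hg hh,
      fun _ => inv_mem_Zalpha⟩⟩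
end

section
/- Let (G, ·, e, α) be a regular Hom-group and let Z(G) = {g ∈ G : g·x = x·g for all x ∈ G} be its center. Then Z(G) is a normal Hom-subgroup of G: it is a Hom-subgroup and (g·h)·α(g⁻¹) ∈ Z(G) for all g ∈ G and all h ∈ Z(G). -/
namespace HomGroup

variable {G : Type*} (H : HomGroup G)

def center : Set G := {g | ∀ x, H.mul g x = H.mul x g}

variable {H}

theorem mul_right_cancel (hinj : Function.Injective H.α) {a b c : G}
    (hc : H.mul c (H.inv c) = H.e) (habc : H.mul a c = H.mul b c) : a = b := by
  have h : H.mul (H.α a) (H.mul c (H.inv c)) = H.mul (H.α b) (H.mul c (H.inv c)) := by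
    rw [H.hom_assoc, H.hom_assoc, habc]
  rw [hc, H.mul_e, H.mul_e] at h
  exact hinj (hinj h)

theorem mul_mul_α_inv_of_mem_center {g h : G} (hg : H.mul g (H.inv g) = H.e)
    (hh : h ∈ H.center) : H.mul (H.mul g h) (H.α (H.inv g)) = H.α (H.α h) := by
  rw [← hh g, ← H.hom_assoc, hg, H.mul_e]

theorem e_mem_center : H.e ∈ H.center := fun x => by
  rw [H.mul_e, H.e_mul]

theorem α_mem_center (hsurj : Function.Surjective H.α) {h : G} (hh : h ∈ H.center) :
    H.α h ∈ H.center := by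
  intro x
  obtain ⟨y, rfl⟩ := hsurj x
  rw [← H.α_mul, ← H.α_mul, hh]

theorem mul_mem_center (hsurj : Function.Surjective H.α) {h₁ h₂ : G}
    (hh₁ : h₁ ∈ H.center) (hh₂ : h₂ ∈ H.center) : H.mul h₁ h₂ ∈ H.center := by
  intro x
  obtain ⟨y, rfl⟩ := hsurj x
  rw [H.hom_assoc, ← hh₁ y, ← H.hom_assoc, ← H.hom_assoc, hh₂ y]

theorem inv_mem_center (hreg : H.IsRegular) {h : G} (hh : h ∈ H.center) :
    H.inv h ∈ H.center := by
  intro x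
  have hl : H.mul (H.mul (H.inv h) x) (H.α h) = H.α (H.α x) := by
    rw [← H.hom_assoc, ← hh x, H.hom_assoc, (hreg.2 h).2, H.e_mul]
  have hr : H.mul (H.mul x (H.inv h)) (H.α h) = H.α (H.α x) := by
    rw [← H.hom_assoc, (hreg.2 h).2, H.mul_e]
  exact mul_right_cancel hreg.1.1 (hreg.2 (H.α h)).1 (hl.trans hr.symm)

theorem isHomSubgroup_center (hreg : H.IsRegular) : H.IsHomSubgroup H.center :=
  ⟨e_mem_center, fun _ => inv_mem_center hreg,
    fun _ hh₁ _ hh₂ => mul_mem_center hreg.1.2 hh₁ hh₂⟩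

end HomGroup

theorem stmt9 {G : Type*} (H : HomGroup G) (hreg : H.IsRegular) :
    H.IsHomSubgroup {g | ∀ x, H.mul g x = H.mul x g} ∧
      ∀ g, ∀ h ∈ {g : G | ∀ x, H.mul g x = H.mul x g},
        H.mul (H.mul g h) (H.α (H.inv g)) ∈ {g : G | ∀ x, H.mul g x = H.mul x g} := by
  refine ⟨H.isHomSubgroup_center hreg, fun g h hh => ?_⟩
  rw [HomGroup.mul_mul_α_inv_of_mem_center (hreg.2 g).1 hh]
  exact HomGroup.α_mem_center hreg.1.2 (HomGroup.α_mem_center hreg.1.2 hh)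
end

section
/- Let f : G → H be a homomorphism of regular Hom-groups (G, ·, e_G, α_G) and (H, ·, e_H, α_H) with f(e_G) = e_H. Then Ker(f) = {g ∈ G : f(g) = e_H} is a normal Hom-subgroup of G: it contains e_G, is closed under · and under inverses, and (g·k)·α_G(g⁻¹) ∈ Ker(f) for all g ∈ G and all k ∈ Ker(f). -/
namespace HomGroup

variable {G H : Type*} {Hg : HomGroup G} {Hh : HomGroup H} {f : G → H}

theorem map_α_of_map_mul (hf_mul : ∀ g g', f (Hg.mul g g') = Hh.mul (f g) (f g'))
    (hf_e : f Hg.e = Hh.e) (g : G) : f (Hg.α g) = Hh.α (f g) := by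
  rw [← Hg.mul_e, hf_mul, hf_e, Hh.mul_e]

theorem map_mul_eq_e (hf_mul : ∀ g g', f (Hg.mul g g') = Hh.mul (f g) (f g')) {g g' : G}
    (hg : f g = Hh.e) (hg' : f g' = Hh.e) : f (Hg.mul g g') = Hh.e := by
  rw [hf_mul, hg, hg', Hh.mul_e, Hh.α_e]

theorem map_inv_eq_e (hα : Function.Injective Hh.α)
    (hG : ∀ g, Hg.mul g (Hg.inv g) = Hg.e)
    (hf_mul : ∀ g g', f (Hg.mul g g') = Hh.mul (f g) (f g')) (hf_e : f Hg.e = Hh.e) {g : G}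
    (hg : f g = Hh.e) : f (Hg.inv g) = Hh.e :=
  hα <| calc
    Hh.α (f (Hg.inv g)) = Hh.mul (f g) (f (Hg.inv g)) := by rw [hg, Hh.e_mul]
    _ = Hh.α Hh.e := by rw [← hf_mul, hG, hf_e, Hh.α_e]

theorem map_conj_eq_e (hG : ∀ g, Hg.mul g (Hg.inv g) = Hg.e)
    (hf_mul : ∀ g g', f (Hg.mul g g') = Hh.mul (f g) (f g')) (hf_e : f Hg.e = Hh.e) (g : G)
    {k : G} (hk : f k = Hh.e) : f (Hg.mul (Hg.mul g k) (Hg.α (Hg.inv g))) = Hh.e := by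
  rw [hf_mul, hf_mul, hk, Hh.mul_e, map_α_of_map_mul hf_mul hf_e, ← Hh.α_mul, ← hf_mul, hG,
    hf_e, Hh.α_e]

end HomGroup

theorem stmt11_general {G H : Type*} (Hg : HomGroup G) (Hh : HomGroup H)
    (hGreg : Hg.IsRegular) (hHreg : Hh.IsRegular)
    (f : G → H) (hf_mul : ∀ g g', f (Hg.mul g g') = Hh.mul (f g) (f g'))
    (hf_e : f Hg.e = Hh.e) :
    Hg.IsHomSubgroup {g | f g = Hh.e} ∧
      ∀ g, ∀ k ∈ {g : G | f g = Hh.e},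
        Hg.mul (Hg.mul g k) (Hg.α (Hg.inv g)) ∈ {g : G | f g = Hh.e} := by
  have hG : ∀ g, Hg.mul g (Hg.inv g) = Hg.e := fun g => (hGreg.2 g).1
  refine ⟨⟨hf_e, fun _ hg => HomGroup.map_inv_eq_e hHreg.1.injective hG hf_mul hf_e hg,
    fun _ h₁ _ h₂ => HomGroup.map_mul_eq_e hf_mul h₁ h₂⟩,
    fun g _ hk => HomGroup.map_conj_eq_e hG hf_mul hf_e g hk⟩

theorem stmt11 {G H : Type*} (Hg : HomGroup G) (Hh : HomGroup H)
    (hGreg : Hg.IsRegular) (hHreg : Hh.IsRegular)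
    (f : G → H) (hf_mul : ∀ g g', f (Hg.mul g g') = Hh.mul (f g) (f g'))
    (hf_α : ∀ g, f (Hg.α g) = Hh.α (f g)) (hf_e : f Hg.e = Hh.e) :
    Hg.IsHomSubgroup {g | f g = Hh.e} ∧
      ∀ g, ∀ k ∈ {g : G | f g = Hh.e},
        Hg.mul (Hg.mul g k) (Hg.α (Hg.inv g)) ∈ {g : G | f g = Hh.e} :=
  stmt11_general Hg Hh hGreg hHreg f hf_mul hf_e
end

section
/- Let f : G → H be a homomorphism of regular Hom-groups (G, ·, e_G, α_G) and (H, ·, e_H, α_H) with f(e_G) = e_H. Then: (1) if N is a normal Hom-subgroup of G, then f(N) is a normal Hom-subgroup of f(G), i.e. (h·f(n))·α_H(h⁻¹) ∈ f(N) for all h ∈ f(G) and n ∈ N; (2) if M ⊆ H satisfies (h·m)·α_H(h⁻¹) ∈ M for all h ∈ f(G) and m ∈ M, then (g·x)·α_G(g⁻¹) ∈ f⁻¹(M) for all g ∈ G and x ∈ f⁻¹(M). -/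
/-! A homomorphism of regular Hom-groups with `f e = e` preserves inverses, since inverses in a
regular Hom-group are unique; hence it maps each conjugate `(g·n)·α(g⁻¹)` to the conjugate
`(f g·f n)·α((f g)⁻¹)`, and both claims follow at once. -/

namespace HomGroup

variable {G H : Type*} (Hg : HomGroup G) (Hh : HomGroup H)

/-- Hom-associativity gives `α(α a) = α(a·g)·α g⁻¹ = α(α g⁻¹)`, then `α` is cancelled twice. -/
lemma eq_inv_of_mul_eq_e (hα : Function.Injective Hg.α) {g a : G}
    (hg : Hg.mul g (Hg.inv g) = Hg.e) (ha : Hg.mul a g = Hg.e) : a = Hg.inv g := by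
  have key := Hg.hom_assoc a g (Hg.inv g)
  rw [hg, ha, Hg.mul_e, Hg.e_mul] at key
  exact hα (hα key)

variable {Hg Hh}

lemma map_inv_of_isRegular (hGreg : Hg.IsRegular) (hHreg : Hh.IsRegular) {f : G → H}
    (hf_mul : ∀ g g', f (Hg.mul g g') = Hh.mul (f g) (f g')) (hf_e : f Hg.e = Hh.e) (g : G) :
    f (Hg.inv g) = Hh.inv (f g) :=
  Hh.eq_inv_of_mul_eq_e hHreg.1.1 (hHreg.2 (f g)).1 <| by rw [← hf_mul, (hGreg.2 g).2, hf_e]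

lemma map_conj_of_isRegular (hGreg : Hg.IsRegular) (hHreg : Hh.IsRegular) {f : G → H}
    (hf_mul : ∀ g g', f (Hg.mul g g') = Hh.mul (f g) (f g'))
    (hf_α : ∀ g, f (Hg.α g) = Hh.α (f g)) (hf_e : f Hg.e = Hh.e) (g n : G) :
    f (Hg.mul (Hg.mul g n) (Hg.α (Hg.inv g))) =
      Hh.mul (Hh.mul (f g) (f n)) (Hh.α (Hh.inv (f g))) := by
  rw [hf_mul, hf_mul, hf_α, map_inv_of_isRegular hGreg hHreg hf_mul hf_e]

end HomGroup

theorem stmt12 {G H : Type*} (Hg : HomGroup G) (Hh : HomGroup H)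
    (hGreg : Hg.IsRegular) (hHreg : Hh.IsRegular)
    (f : G → H) (hf_mul : ∀ g g', f (Hg.mul g g') = Hh.mul (f g) (f g'))
    (hf_α : ∀ g, f (Hg.α g) = Hh.α (f g)) (hf_e : f Hg.e = Hh.e) :
    (∀ N : Set G, Hg.IsHomSubgroup N →
      (∀ g, ∀ n ∈ N, Hg.mul (Hg.mul g n) (Hg.α (Hg.inv g)) ∈ N) →
      ∀ h ∈ f '' Set.univ, ∀ n ∈ N,
        Hh.mul (Hh.mul h (f n)) (Hh.α (Hh.inv h)) ∈ f '' N) ∧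
    (∀ M : Set H,
      (∀ h ∈ f '' Set.univ, ∀ m ∈ M, Hh.mul (Hh.mul h m) (Hh.α (Hh.inv h)) ∈ M) →
      ∀ g, ∀ x ∈ f ⁻¹' M, Hg.mul (Hg.mul g x) (Hg.α (Hg.inv g)) ∈ f ⁻¹' M) := by
  have hconj := HomGroup.map_conj_of_isRegular hGreg hHreg hf_mul hf_α hf_e
  constructor
  · rintro N - hnormal _ ⟨g, -, rfl⟩ n hn
    exact ⟨_, hnormal g n hn, hconj g n⟩
  · intro M hM g x hx
    rw [Set.mem_preimage, hconj]
    exact hM (f g) (Set.mem_image_of_mem f trivial) (f x) hx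
end

section
/- Let H be a Hom-subgroup of a regular Hom-group (G, ·, e, α) with α(H) = H, and let g, g' ∈ G. Then gH = g'H (where gH = {g·h : h ∈ H}) if and only if g⁻¹·g' ∈ H. -/
/-! A regular Hom-group is the `α`-twist of an ordinary group: `x * y := α⁻¹ (x · y)` is a group
law with unit `e` and inverse `g ↦ g⁻¹`, and `x · y = α (x * y)`. A Hom-subgroup `H` with
`α(H) = H` is a subgroup of that group, and the Hom-coset `gH` is the image under the injective
map `α` of the ordinary coset `g * H`. The criterion therefore reduces to the classical
`g * H = g' * H ↔ g⁻¹ * g' ∈ H`, together with `g⁻¹ · g' = α (g⁻¹ * g')` and `α(H) = H`. -/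

open scoped Pointwise in
theorem Function.Injective.image_comp_mul_left_eq_iff {G : Type*} [Group G] {f : G → G}
    (hf : Function.Injective f) (K : Subgroup G) (g g' : G) :
    (fun h => f (g * h)) '' K = (fun h => f (g' * h)) '' K ↔ g⁻¹ * g' ∈ K := by
  have image_eq (x : G) : (fun h => f (x * h)) '' K = f '' (x • (K : Set G)) := by
    rw [← Set.image_smul, Set.image_image]; rfl
  rw [image_eq, image_eq, (Set.image_injective.mpr hf).eq_iff, leftCoset_eq_iff]

namespace HomGroup

variable {G : Type*} (Hg : HomGroup G) (hreg : Hg.IsRegular)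

noncomputable def αEquiv : G ≃ G := Equiv.ofBijective Hg.α hreg.1

theorem α_αEquiv_symm_apply (x : G) : Hg.α ((Hg.αEquiv hreg).symm x) = x :=
  (Hg.αEquiv hreg).apply_symm_apply x

theorem αEquiv_symm_α (x : G) : (Hg.αEquiv hreg).symm (Hg.α x) = x :=
  (Hg.αEquiv hreg).symm_apply_apply x

noncomputable abbrev untwistedGroup : Group G where
  mul x y := (Hg.αEquiv hreg).symm (Hg.mul x y)
  one := Hg.e
  inv := Hg.inv
  mul_assoc x y z := by
    change (Hg.αEquiv hreg).symm (Hg.mul ((Hg.αEquiv hreg).symm (Hg.mul x y)) z) =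
      (Hg.αEquiv hreg).symm (Hg.mul x ((Hg.αEquiv hreg).symm (Hg.mul y z)))
    rw [Equiv.apply_eq_iff_eq]
    apply hreg.1.1
    rw [α_mul, α_mul, α_αEquiv_symm_apply, α_αEquiv_symm_apply]
    exact (Hg.hom_assoc x y z).symm
  one_mul x := by
    change (Hg.αEquiv hreg).symm (Hg.mul Hg.e x) = x
    rw [e_mul, αEquiv_symm_α]
  mul_one x := by
    change (Hg.αEquiv hreg).symm (Hg.mul x Hg.e) = x
    rw [mul_e, αEquiv_symm_α]
  inv_mul_cancel x := by
    change (Hg.αEquiv hreg).symm (Hg.mul (Hg.inv x) x) = Hg.e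
    rw [(hreg.2 x).2, ← Hg.α_e, αEquiv_symm_α, Hg.α_e]

theorem mul_eq_α_untwisted_mul (x y : G) :
    letI := Hg.untwistedGroup hreg
    Hg.mul x y = Hg.α (x * y) :=
  (Hg.α_αEquiv_symm_apply hreg _).symm

theorem αEquiv_symm_mem {H : Set G} (hαH : Hg.α '' H = H) {y : G} (hy : y ∈ H) :
    (Hg.αEquiv hreg).symm y ∈ H := by
  obtain ⟨h, hh, rfl⟩ := hαH ▸ hy
  rwa [αEquiv_symm_α]

noncomputable def untwistedSubgroup {H : Set G} (hH : Hg.IsHomSubgroup H)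
    (hαH : Hg.α '' H = H) : @Subgroup G (Hg.untwistedGroup hreg) :=
  letI := Hg.untwistedGroup hreg
  { carrier := H
    one_mem' := hH.1
    inv_mem' := hH.2.1 _
    mul_mem' := fun ha hb => Hg.αEquiv_symm_mem hreg hαH (hH.2.2 _ ha _ hb) }

end HomGroup

theorem stmt13 {G : Type*} (Hg : HomGroup G) (hreg : Hg.IsRegular)
    (H : Set G) (hH : Hg.IsHomSubgroup H) (hαH : Hg.α '' H = H)
    (g g' : G) :
    (fun h => Hg.mul g h) '' H = (fun h => Hg.mul g' h) '' H ↔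
      Hg.mul (Hg.inv g) g' ∈ H := by
  let := Hg.untwistedGroup hreg
  have hα : Function.Injective Hg.α := hreg.1.1
  simp only [Hg.mul_eq_α_untwisted_mul hreg]
  refine (hα.image_comp_mul_left_eq_iff (Hg.untwistedSubgroup hreg hH hαH) g g').trans ?_
  conv_rhs => rw [← hαH]
  exact hα.mem_set_image.symm
end

section
/- Let (G, ·, e, α) be a regular Hom-group and for g, h ∈ G write [g, h] = (g⁻¹·h⁻¹)·(g·h). Then the set of commutators is stable under Hom-conjugation: for all s, g, h ∈ G, (s·[g,h])·α(s⁻¹) = [ (α⁻²(s)·g)·α⁻¹(s⁻¹), (α⁻²(s)·h)·α⁻¹(s⁻¹) ]; in particular for all s, g, h ∈ G there exist g', h' ∈ G with (s·[g,h])·α(s⁻¹) = [g', h']. -/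
/-!
A regular Hom-group is the Yau twist of a group: `a * b := α⁻¹(a·b)` is a group law on `G` with unit
`e` and inverse `g ↦ g⁻¹`, `α` is an automorphism of it, and `a·b = α(a * b)`. Rewritten in this
group, both sides of the identity are words in `s, g, h` and their `α`-images, and they agree as
group words.
-/

namespace HomGroup

variable {G : Type*} (H : HomGroup G) {β : G → G}

theorem β_mul (hβl : Function.LeftInverse β H.α) (hβr : Function.RightInverse β H.α) (a b : G) :
    β (H.mul a b) = H.mul (β a) (β b) :=
  hβl.injective (by rw [hβr, H.α_mul, hβr, hβr])

theorem hom_assoc_β (hβr : Function.RightInverse β H.α) (a b c : G) :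
    H.mul (H.mul (β a) b) c = H.mul a (H.mul b (β c)) := by
  simpa only [hβr a, hβr c] using (H.hom_assoc (β a) b (β c)).symm

abbrev untwist (hβl : Function.LeftInverse β H.α) (hβr : Function.RightInverse β H.α)
    (hinv : ∀ g, H.mul (H.inv g) g = H.e) : Group G where
  mul a b := β (H.mul a b)
  one := H.e
  inv := H.inv
  mul_assoc a b c := by
    change β (H.mul (β (H.mul a b)) c) = β (H.mul a (β (H.mul b c)))
    rw [H.β_mul hβl hβr a b, H.β_mul hβl hβr b c, H.hom_assoc_β hβr]
  one_mul a := by change β (H.mul H.e a) = a; rw [H.e_mul, hβl]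
  mul_one a := by change β (H.mul a H.e) = a; rw [H.mul_e, hβl]
  inv_mul_cancel a := by
    change β (H.mul (H.inv a) a) = H.e
    simpa only [hinv, H.α_e] using hβl H.e

theorem mul_eq_α_untwist_mul (hβl : Function.LeftInverse β H.α)
    (hβr : Function.RightInverse β H.α) (hinv : ∀ g, H.mul (H.inv g) g = H.e) (a b : G) :
    H.mul a b = H.α (letI := H.untwist hβl hβr hinv; a * b) :=
  (hβr _).symm

def untwistAut (hβl : Function.LeftInverse β H.α) (hβr : Function.RightInverse β H.α)
    (hinv : ∀ g, H.mul (H.inv g) g = H.e) : letI := H.untwist hβl hβr hinv; G ≃* G :=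
  letI := H.untwist hβl hβr hinv
  { toFun := H.α
    invFun := β
    left_inv := hβl
    right_inv := hβr
    map_mul' := fun a b => by
      change H.α (β (H.mul a b)) = β (H.mul (H.α a) (H.α b))
      rw [hβr, ← H.α_mul, hβl] }

end HomGroup

theorem stmt14 {G : Type*} (H : HomGroup G) (hreg : H.IsRegular)
    (β : G → G) (hβl : Function.LeftInverse β H.α) (hβr : Function.RightInverse β H.α)
    (comm : G → G → G)
    (hcomm : ∀ g h, comm g h = H.mul (H.mul (H.inv g) (H.inv h)) (H.mul g h)) :
    ∀ s g h,
      H.mul (H.mul s (comm g h)) (H.α (H.inv s)) =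
        comm (H.mul (H.mul (β (β s)) g) (β (H.inv s)))
             (H.mul (H.mul (β (β s)) h) (β (H.inv s))) ∧
      ∃ g' h', H.mul (H.mul s (comm g h)) (H.α (H.inv s)) = comm g' h' := by
  intro s g h
  have hinv : ∀ g, H.mul (H.inv g) g = H.e := fun g => (hreg.2 g).2
  let := H.untwist hβl hβr hinv
  let φ := H.untwistAut hβl hβr hinv
  have hα : H.α = φ := rfl
  have hβ : β = φ.symm := rfl
  have hinv_eq : H.inv = (·⁻¹) := rfl
  have key : H.mul (H.mul s (comm g h)) (H.α (H.inv s)) =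
      comm (H.mul (H.mul (β (β s)) g) (β (H.inv s)))
           (H.mul (H.mul (β (β s)) h) (β (H.inv s))) := by
    simp only [hcomm, H.mul_eq_α_untwist_mul hβl hβr hinv, hα, hβ, hinv_eq, map_mul, map_inv,
      MulEquiv.apply_symm_apply]
    group
  exact ⟨key, _, _, key⟩
end

section
/- Let (A, ·, e_A, α_A) and (B, ·, e_B, α_B) be regular Hom-groups, let (C, +, 0, α_C) be a regular Hom-group written additively (not assumed commutative), and let f : A × B → C be a Hom-bilinear map. Then any two elements of the image of f commute: for all a₁, a₂ ∈ A and b₁, b₂ ∈ B, f(a₁, b₂) + f(a₂, b₁) = f(a₂, b₁) + f(a₁, b₂). -/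
/-- A Hom-bilinear map from the product of two Hom-groups into a third
(written additively in the paper). -/
def HomBilinear {A B C : Type*} (HA : HomGroup A) (HB : HomGroup B) (HC : HomGroup C)
    (f : A → B → C) : Prop :=
  (∀ a₁ a₂ b, f (HA.mul a₁ a₂) (HB.α b) = HC.mul (f a₁ b) (f a₂ b)) ∧
  (∀ a b₁ b₂, f (HA.α a) (HB.mul b₁ b₂) = HC.mul (f a b₁) (f a b₂)) ∧
  (∀ a b, f (HA.α a) (HB.α b) = HC.α (f a b))

/-!
Both ways of expanding `f (α (a₁·a₂)) (α (b₁·b₂))` by Hom-bilinearity give the interchange law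
`(p + q) + (r + s) = (p + r) + (q + s)` for `p = f a₁ b₁`, `q = f a₁ b₂`, `r = f a₂ b₁`, `s = f a₂ b₂`.
In a regular Hom-group, Hom-associativity together with cancellation (available because `α` is
injective) strips off `p` and `s`, leaving `q + r = r + q`, as in the Eckmann–Hilton argument.
-/

namespace HomGroup

variable {G : Type*} {H : HomGroup G}

theorem mul_left_cancel (hα : Function.Injective H.α) {g h h' : G}
    (hg : H.mul (H.inv g) g = H.e) (hgh : H.mul g h = H.mul g h') : h = h' := by
  have key : ∀ x, H.mul (H.α (H.inv g)) (H.mul g x) = H.α (H.α x) := fun x => by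
    rw [H.hom_assoc, hg, H.e_mul]
  exact hα (hα (by rw [← key, hgh, key]))

theorem mul_right_cancel_s17 (hα : Function.Injective H.α) {g h h' : G}
    (hg : H.mul g (H.inv g) = H.e) (hgh : H.mul h g = H.mul h' g) : h = h' := by
  have key : ∀ x, H.mul (H.mul x g) (H.α (H.inv g)) = H.α (H.α x) := fun x => by
    rw [← H.hom_assoc, hg, H.mul_e]
  exact hα (hα (by rw [← key, hgh, key]))

theorem mul_comm_of_interchange (hH : H.IsRegular) {p q r s : G}
    (h : H.mul (H.mul p q) (H.mul r s) = H.mul (H.mul p r) (H.mul q s)) :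
    H.mul q r = H.mul r q := by
  obtain ⟨⟨hinj, hsurj⟩, hinv⟩ := hH
  obtain ⟨t, ht⟩ := hsurj (H.mul r s)
  obtain ⟨u, hu⟩ := hsurj (H.mul q s)
  rw [← ht, ← hu, ← H.hom_assoc, ← H.hom_assoc] at h
  have hqt : H.mul q t = H.mul r u := mul_left_cancel hinj (hinv (H.α p)).2 h
  have hqrs : H.mul (H.mul q r) (H.α s) = H.mul (H.mul r q) (H.α s) := by
    rw [← H.hom_assoc, ← H.hom_assoc, ← ht, ← hu, ← H.α_mul, ← H.α_mul, hqt]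
  exact mul_right_cancel_s17 hinj (hinv (H.α s)).1 hqrs

end HomGroup

theorem HomBilinear.interchange {A B C : Type*} {HA : HomGroup A} {HB : HomGroup B}
    {HC : HomGroup C} {f : A → B → C} (hf : HomBilinear HA HB HC f) (a₁ a₂ : A) (b₁ b₂ : B) :
    HC.mul (HC.mul (f a₁ b₁) (f a₁ b₂)) (HC.mul (f a₂ b₁) (f a₂ b₂)) =
      HC.mul (HC.mul (f a₁ b₁) (f a₂ b₁)) (HC.mul (f a₁ b₂) (f a₂ b₂)) := by
  obtain ⟨hmul_left, hmul_right, -⟩ := hf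
  calc _ = f (HA.α (HA.mul a₁ a₂)) (HB.α (HB.mul b₁ b₂)) := by
        rw [HA.α_mul, hmul_left, hmul_right, hmul_right]
    _ = _ := by rw [HB.α_mul, hmul_right, hmul_left, hmul_left]

theorem stmt17_general {A B C : Type*} (HA : HomGroup A) (HB : HomGroup B) (HC : HomGroup C)
    (hC : HC.IsRegular)
    (f : A → B → C) (hf : HomBilinear HA HB HC f) :
    ∀ a₁ a₂ b₁ b₂,
      HC.mul (f a₁ b₂) (f a₂ b₁) = HC.mul (f a₂ b₁) (f a₁ b₂) :=
  fun a₁ a₂ b₁ b₂ => HomGroup.mul_comm_of_interchange hC (hf.interchange a₁ a₂ b₁ b₂)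

theorem stmt17 {A B C : Type*} (HA : HomGroup A) (HB : HomGroup B) (HC : HomGroup C)
    (hA : HA.IsRegular) (hB : HB.IsRegular) (hC : HC.IsRegular)
    (f : A → B → C) (hf : HomBilinear HA HB HC f) :
    ∀ a₁ a₂ b₁ b₂,
      HC.mul (f a₁ b₂) (f a₂ b₁) = HC.mul (f a₂ b₁) (f a₁ b₂) :=
  stmt17_general HA HB HC hC f hf
end

section
/- Let (A, ·, e_A, α_A) and (B, ·, e_B, α_B) be regular Hom-groups, let (C, +, 0, α_C) be a regular Hom-group written additively (not assumed commutative), and let f : A × B → C be a Hom-bilinear map. Then f vanishes on commutators in either argument: for all a₁, a₂ ∈ A and b ∈ B, f((a₁⁻¹·a₂⁻¹)·(a₁·a₂), b) = 0, and for all a ∈ A and b₁, b₂ ∈ B, f(a, (b₁⁻¹·b₂⁻¹)·(b₁·b₂)) = 0. -/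
/-!
Since `α` is bijective, a regular Hom-group is cancellative, and Hom-associativity turns the
interchange law `(x + x) + (y + y) = (x + y) + (x + y)` into `x + y = y + x`. Expanding
`f(a₁·a₂, b·b)` in the two possible orders gives exactly this interchange law for
`x = f(a₁, b)` and `y = f(a₂, b)`, so values of `f` with a common argument commute. As `f` also
sends inverses to inverses, it maps a commutator `(a₁⁻¹·a₂⁻¹)·(a₁·a₂)` to
`(-x - y) + (x + y) = -(y + x) + (x + y) = 0`. The second argument follows by swapping the
roles of `A` and `B`.
-/

def HomGroup.commutator {G : Type*} (H : HomGroup G) (g h : G) : G :=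
  H.mul (H.mul (H.inv g) (H.inv h)) (H.mul g h)

namespace HomGroup.IsRegular

variable {G : Type*} {H : HomGroup G} (hH : H.IsRegular)
include hH

lemma mul_left_cancel {a u v : G} (huv : H.mul a u = H.mul a v) : u = v := by
  have key : ∀ w, H.mul (H.α (H.inv a)) (H.mul a w) = H.α (H.α w) := fun w => by
    rw [H.hom_assoc, (hH.2 a).2, H.e_mul]
  exact hH.1.injective (hH.1.injective (by rw [← key u, ← key v, huv]))

lemma mul_right_cancel {a u v : G} (huv : H.mul u a = H.mul v a) : u = v := by
  have key : ∀ w, H.mul (H.mul w a) (H.α (H.inv a)) = H.α (H.α w) := fun w => by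
    rw [← H.hom_assoc, (hH.2 a).1, H.mul_e]
  exact hH.1.injective (hH.1.injective (by rw [← key u, ← key v, huv]))

lemma mul_comm_of_interchange {x y : G}
    (hxy : H.mul (H.mul x x) (H.mul y y) = H.mul (H.mul x y) (H.mul x y)) :
    H.mul x y = H.mul y x := by
  obtain ⟨x, rfl⟩ := hH.1.2 x
  obtain ⟨y, rfl⟩ := hH.1.2 y
  have hyy : H.mul (H.α y) (H.α y) = H.α (H.mul y y) := (H.α_mul y y).symm
  have hxy' : H.mul (H.α x) (H.α y) = H.α (H.mul x y) := (H.α_mul x y).symm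
  rw [hyy, ← H.hom_assoc] at hxy
  nth_rewrite 2 [hxy'] at hxy
  rw [← H.hom_assoc] at hxy
  have h := hH.mul_left_cancel hxy
  rw [H.hom_assoc, H.hom_assoc] at h
  rw [hxy', ← H.α_mul, hH.mul_right_cancel h]

lemma commutator_eq_e_of_mul_comm {x y : G} (hxy : H.mul x y = H.mul y x) :
    H.commutator x y = H.e := by
  rw [commutator, ← H.inv_anti, ← hxy]
  exact (hH.2 _).2

end HomGroup.IsRegular

namespace HomBilinear

variable {A B C : Type*} {HA : HomGroup A} {HB : HomGroup B} {HC : HomGroup C}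
  {f : A → B → C} (hf : HomBilinear HA HB HC f)
include hf

lemma flip : HomBilinear HB HA HC (fun b a => f a b) :=
  ⟨fun b₁ b₂ a => hf.2.1 a b₁ b₂, fun b a₁ a₂ => hf.1 a₁ a₂ b, fun b a => hf.2.2 a b⟩

lemma map_e_left (hC : HC.IsRegular) (b : B) : f HA.e b = HC.e := by
  refine hC.mul_left_cancel (a := f HA.e b) ?_
  rw [← hf.1, HA.mul_e, HA.α_e, HC.mul_e, ← hf.2.2, HA.α_e]

lemma map_inv_left (hA : HA.IsRegular) (hC : HC.IsRegular) (a : A) (b : B) :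
    f (HA.inv a) b = HC.inv (f a b) := by
  refine hC.mul_left_cancel (a := f a b) ?_
  rw [← hf.1, (hA.2 a).1, hf.map_e_left hC, (hC.2 _).1]

lemma map_mul_comm_left (hB : HB.IsRegular) (hC : HC.IsRegular) (a₁ a₂ : A) (b : B) :
    HC.mul (f a₁ b) (f a₂ b) = HC.mul (f a₂ b) (f a₁ b) := by
  obtain ⟨b, rfl⟩ := hB.1.2 b
  refine hC.mul_comm_of_interchange ?_
  calc HC.mul (HC.mul (f a₁ (HB.α b)) (f a₁ (HB.α b))) (HC.mul (f a₂ (HB.α b)) (f a₂ (HB.α b)))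
      = HC.mul (f (HA.α a₁) (HB.mul (HB.α b) (HB.α b)))
          (f (HA.α a₂) (HB.mul (HB.α b) (HB.α b))) := by rw [hf.2.1, hf.2.1]
    _ = f (HA.α (HA.mul a₁ a₂)) (HB.mul (HB.α (HB.α b)) (HB.α (HB.α b))) := by
      rw [← hf.1, HA.α_mul, HB.α_mul]
    _ = HC.mul (HC.mul (f a₁ (HB.α b)) (f a₂ (HB.α b)))
          (HC.mul (f a₁ (HB.α b)) (f a₂ (HB.α b))) := by rw [hf.2.1, hf.1]

lemma map_commutator_left (hA : HA.IsRegular) (hB : HB.IsRegular) (hC : HC.IsRegular)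
    (a₁ a₂ : A) (b : B) : f (HA.commutator a₁ a₂) b = HC.e := by
  obtain ⟨b, rfl⟩ := hB.1.2 b
  obtain ⟨b, rfl⟩ := hB.1.2 b
  rw [HomGroup.commutator, hf.1, hf.1, hf.1, hf.map_inv_left hA hC, hf.map_inv_left hA hC]
  exact hC.commutator_eq_e_of_mul_comm (hf.map_mul_comm_left hB hC a₁ a₂ b)

end HomBilinear

theorem stmt18 {A B C : Type*} (HA : HomGroup A) (HB : HomGroup B) (HC : HomGroup C)
    (hA : HA.IsRegular) (hB : HB.IsRegular) (hC : HC.IsRegular)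
    (f : A → B → C) (hf : HomBilinear HA HB HC f) :
    (∀ a₁ a₂ b,
      f (HA.mul (HA.mul (HA.inv a₁) (HA.inv a₂)) (HA.mul a₁ a₂)) b = HC.e) ∧
    (∀ a b₁ b₂,
      f a (HB.mul (HB.mul (HB.inv b₁) (HB.inv b₂)) (HB.mul b₁ b₂)) = HC.e) :=
  ⟨hf.map_commutator_left hA hB hC, fun a b₁ b₂ => hf.flip.map_commutator_left hB hA hC b₁ b₂ a⟩
end

section
/- Let (A, +, ·, 0, 1, α) be a unitary regular α-Hom-ring of type (1). Then: (1) a·0 = 0·a = 0 for all a ∈ A; (2) for all a, b ∈ A, the additive inverse of a·b is given by (−a)·b = a·(−b) = −(a·b); (3) α(−a) = −α(a) for all a ∈ A. -/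
/-- A unitary regular α-Hom-ring of type (1). -/
structure HomRing1 (A : Type*) where
  add : A → A → A
  mul : A → A → A
  zero : A
  one : A
  α : A → A
  neg : A → A
  add_comm : ∀ x y, add x y = add y x
  add_hom_assoc : ∀ x y z, add (α x) (add y z) = add (add x y) (α z)
  α_add : ∀ x y, α (add x y) = add (α x) (α y)
  add_zero : ∀ x, add x zero = α x
  α_zero : α zero = zero
  add_neg : ∀ x, add x (neg x) = zero
  α_bij : Function.Bijective α
  α_mul : ∀ x y, α (mul x y) = mul (α x) (α y)
  mul_hom_assoc : ∀ x y z, mul (α x) (mul y z) = mul (mul x y) (α z)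
  left_distrib : ∀ x y z, mul (α x) (add y z) = add (mul x y) (mul x z)
  right_distrib : ∀ x y z, mul (add y z) (α x) = add (mul y x) (mul z x)
  mul_one : ∀ x, mul x one = α x
  one_mul : ∀ x, mul one x = α x
  α_one : α one = one

/-!
Everything follows from left cancellation for `+`: adding `α (-x)` on the left and using
Hom-associativity turns `x + y` into `α (α y)`, and `α` is injective. Then `a·0 + a·0 = α a · α 0 =
a·0 + 0` gives `a·0 = 0`, and `a·b + (-a)·b = 0·α b = 0 = a·b + -(a·b)` gives `(-a)·b = -(a·b)`.
-/

namespace HomRing1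

variable {A : Type*} (R : HomRing1 A)

theorem add_left_cancel {x y z : A} (h : R.add x y = R.add x z) : y = z := by
  have hα : ∀ w, R.add (R.α (R.neg x)) (R.add x w) = R.α (R.α w) := fun w => by
    rw [R.add_hom_assoc, R.add_comm (R.neg x) x, R.add_neg, R.add_comm, R.add_zero]
  exact R.α_bij.injective <| R.α_bij.injective <| by rw [← hα y, ← hα z, h]

theorem mul_zero (a : A) : R.mul a R.zero = R.zero :=
  R.add_left_cancel <| by
    rw [← R.left_distrib, R.add_zero R.zero, R.α_zero, R.add_zero, R.α_mul, R.α_zero]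

theorem zero_mul (a : A) : R.mul R.zero a = R.zero :=
  R.add_left_cancel <| by
    rw [← R.right_distrib, R.add_zero R.zero, R.α_zero, R.add_zero, R.α_mul, R.α_zero]

theorem neg_mul (a b : A) : R.mul (R.neg a) b = R.neg (R.mul a b) :=
  R.add_left_cancel (x := R.mul a b) <| by
    rw [← R.right_distrib, R.add_neg, R.zero_mul, R.add_neg]

theorem mul_neg (a b : A) : R.mul a (R.neg b) = R.neg (R.mul a b) :=
  R.add_left_cancel (x := R.mul a b) <| by
    rw [← R.left_distrib, R.add_neg, R.mul_zero, R.add_neg]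

theorem α_neg (a : A) : R.α (R.neg a) = R.neg (R.α a) :=
  R.add_left_cancel (x := R.α a) <| by
    rw [← R.α_add, R.add_neg, R.α_zero, R.add_neg]

end HomRing1

theorem stmt19 {A : Type*} (R : HomRing1 A) :
    (∀ a, R.mul a R.zero = R.zero ∧ R.mul R.zero a = R.zero) ∧
    (∀ a b, R.mul (R.neg a) b = R.neg (R.mul a b) ∧
      R.mul a (R.neg b) = R.neg (R.mul a b)) ∧
    (∀ a, R.α (R.neg a) = R.neg (R.α a)) :=
  ⟨fun a => ⟨R.mul_zero a, R.zero_mul a⟩, fun a b => ⟨R.neg_mul a b, R.mul_neg a b⟩, R.α_neg⟩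
end
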